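/- In the AI regulation game with separable quadratic costs and no regulation (c0ab = c1ab = 0, with c0aa, c0bb, c1aa, c1bb > 0, rα, rβ > 0, δ ∈ (0,1)), both players invest a strictly positive amount in each attribute: for every γ0 = (α0, β0) ∈ ℝ², the unique maximizer of γ1 ↦ U_D(γ0, γ1) over {(α, β) : α ≥ α0, β ≥ β0} is γ0 + ((1−δ)·rα/(2·c1aa), (1−δ)·rβ/(2·c1bb)), whose increment has strictly positive coordinates; and the unique maximizer of the generalist's composed utility g(γ0) := δ·(r ⬝ᵥ (γ0 + w)) − γ0ᵀ C0 γ0 over {(α, β) : α ≥ 0, β ≥ 0}, where w = ((1−δ)·rα/(2·c1aa), (1−δ)·rβ/(2·c1bb)), is (δ·rα/(2·c0aa), δ·rβ/(2·c0bb)), which has strictly positive coordinates. -/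

import Mathlib

/-! With separable costs both objectives split into one concave parabola `b x - c x²` per
attribute, maximized exactly at `x = b / (2c)`. For the specialist this applies to the
increment `γ1 - γ0`, so the best response lies in the interior of the feasible set and the
constraints `γ0 ≤ γ1` never bind; for the generalist the specialist's increment `w` only
adds a constant. -/

open Matrix

/-- The domain specialist's utility with separable costs `C1 = !![c1aa, 0; 0, c1bb]`. -/
noncomputable def UD (c1aa c1bb rα rβ δ : ℝ) (γ0 γ1 : Fin 2 → ℝ) : ℝ :=
  (1 - δ) * (rα * γ1 0 + rβ * γ1 1)
    - (γ1 - γ0) ⬝ᵥ ((!![c1aa, 0; 0, c1bb] : Matrix (Fin 2) (Fin 2) ℝ) *ᵥ (γ1 - γ0))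

/-- The generalist's composed utility with separable costs `C0 = !![c0aa, 0; 0, c0bb]`:
`g(γ0) = δ·(r ⬝ᵥ (γ0 + w)) − γ0ᵀ C0 γ0`. -/
noncomputable def gComp (c0aa c0bb rα rβ δ : ℝ) (w γ0 : Fin 2 → ℝ) : ℝ :=
  δ * ((![rα, rβ] : Fin 2 → ℝ) ⬝ᵥ (γ0 + w))
    - γ0 ⬝ᵥ ((!![c0aa, 0; 0, c0bb] : Matrix (Fin 2) (Fin 2) ℝ) *ᵥ γ0)

theorem dotProduct_sub_diagonal_quadForm_lt {ι : Type*} [Fintype ι] [DecidableEq ι]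
    {b c m x : ι → ℝ} (hc : ∀ i, 0 < c i) (hm : ∀ i, 2 * c i * m i = b i) (hx : x ≠ m) :
    b ⬝ᵥ x - x ⬝ᵥ (diagonal c *ᵥ x) < b ⬝ᵥ m - m ⬝ᵥ (diagonal c *ᵥ m) := by
  have gap : ∀ i, b i * m i - m i * (c i * m i) - (b i * x i - x i * (c i * x i))
      = c i * (x i - m i) ^ 2 := fun i => by rw [← hm]; ring
  simp only [dotProduct, mulVec_diagonal, ← Finset.sum_sub_distrib]
  obtain ⟨j, hj⟩ := Function.ne_iff.mp hx
  refine Finset.sum_lt_sum (fun i _ => ?_) ⟨j, Finset.mem_univ j, ?_⟩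
  · rw [← sub_nonneg, gap]
    exact mul_nonneg (hc i).le (sq_nonneg _)
  · rw [← sub_pos, gap]
    exact mul_pos (hc j) (sq_pos_of_ne_zero (sub_ne_zero.mpr hj))

theorem UD_eq (c1aa c1bb rα rβ δ : ℝ) (γ0 γ1 : Fin 2 → ℝ) :
    UD c1aa c1bb rα rβ δ γ0 γ1 = (1 - δ) * (![rα, rβ] ⬝ᵥ γ0) +
      (((1 - δ) • ![rα, rβ]) ⬝ᵥ (γ1 - γ0)
        - (γ1 - γ0) ⬝ᵥ (diagonal ![c1aa, c1bb] *ᵥ (γ1 - γ0))) := by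
  rw [UD, diagonal_vec2]
  simp only [dotProduct, Fin.sum_univ_two, Pi.smul_apply, Pi.sub_apply, smul_eq_mul,
    cons_val_zero, cons_val_one]
  ring

theorem gComp_eq (c0aa c0bb rα rβ δ : ℝ) (w γ0 : Fin 2 → ℝ) :
    gComp c0aa c0bb rα rβ δ w γ0 = δ * (![rα, rβ] ⬝ᵥ w) +
      ((δ • ![rα, rβ]) ⬝ᵥ γ0 - γ0 ⬝ᵥ (diagonal ![c0aa, c0bb] *ᵥ γ0)) := by
  rw [gComp, diagonal_vec2, dotProduct_add, smul_dotProduct, smul_eq_mul]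
  ring

/-- In the separable quadratic-cost game with no regulation, both players invest a
strictly positive amount in each attribute: the specialist's unique best response is
`γ0 + ((1−δ)rα/(2c1aa), (1−δ)rβ/(2c1bb))` and the generalist's unique optimal strategy
is `(δrα/(2c0aa), δrβ/(2c0bb))`. -/
theorem separable_noreg_positive_investment
    (c0aa c0bb c1aa c1bb rα rβ δ : ℝ)
    (hc0aa : 0 < c0aa) (hc0bb : 0 < c0bb) (hc1aa : 0 < c1aa) (hc1bb : 0 < c1bb)
    (hrα : 0 < rα) (hrβ : 0 < rβ) (hδ0 : 0 < δ) (hδ1 : δ < 1) :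
    (0 < (1 - δ) * rα / (2 * c1aa) ∧ 0 < (1 - δ) * rβ / (2 * c1bb)) ∧
    (∀ γ0 γ1 : Fin 2 → ℝ, γ0 0 ≤ γ1 0 → γ0 1 ≤ γ1 1 →
      γ1 ≠ γ0 + ![(1 - δ) * rα / (2 * c1aa), (1 - δ) * rβ / (2 * c1bb)] →
      UD c1aa c1bb rα rβ δ γ0 γ1 <
        UD c1aa c1bb rα rβ δ γ0
          (γ0 + ![(1 - δ) * rα / (2 * c1aa), (1 - δ) * rβ / (2 * c1bb)])) ∧
    (0 < δ * rα / (2 * c0aa) ∧ 0 < δ * rβ / (2 * c0bb)) ∧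
    (∀ γ0 : Fin 2 → ℝ, 0 ≤ γ0 0 → 0 ≤ γ0 1 →
      γ0 ≠ ![δ * rα / (2 * c0aa), δ * rβ / (2 * c0bb)] →
      gComp c0aa c0bb rα rβ δ
          ![(1 - δ) * rα / (2 * c1aa), (1 - δ) * rβ / (2 * c1bb)] γ0 <
        gComp c0aa c0bb rα rβ δ
          ![(1 - δ) * rα / (2 * c1aa), (1 - δ) * rβ / (2 * c1bb)]
          ![δ * rα / (2 * c0aa), δ * rβ / (2 * c0bb)]) := by
  have h1δ : 0 < 1 - δ := sub_pos.mpr hδ1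
  have hc1 : ∀ i, 0 < ![c1aa, c1bb] i := Fin.forall_fin_two.mpr ⟨hc1aa, hc1bb⟩
  have hc0 : ∀ i, 0 < ![c0aa, c0bb] i := Fin.forall_fin_two.mpr ⟨hc0aa, hc0bb⟩
  refine ⟨⟨by positivity, by positivity⟩, fun γ0 γ1 _ _ hne => ?_,
    ⟨by positivity, by positivity⟩, fun γ0 _ _ hne => ?_⟩
  · rw [UD_eq, UD_eq, add_sub_cancel_left]
    refine (add_lt_add_iff_left _).mpr (dotProduct_sub_diagonal_quadForm_lt hc1 ?_ ?_)
    · exact Fin.forall_fin_two.mpr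
        ⟨mul_div_cancel₀ _ (by positivity), mul_div_cancel₀ _ (by positivity)⟩
    · exact fun h => hne (eq_add_of_sub_eq' h)
  · rw [gComp_eq, gComp_eq]
    refine (add_lt_add_iff_left _).mpr (dotProduct_sub_diagonal_quadForm_lt hc0 ?_ hne)
    exact Fin.forall_fin_two.mpr
      ⟨mul_div_cancel₀ _ (by positivity), mul_div_cancel₀ _ (by positivity)⟩
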